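/- arXiv:2106.07094 — 2 statements merged into one kernel-verified Lean document; each statement's English description precedes it below -/
import Mathlib

section
/- Let f : ℝ^d → ℝ be convex, L-smooth (differentiable with L-Lipschitz gradient, L > 0), and G-Lipschitz (‖∇f(w)‖ ≤ G for all w). Suppose there exists λ with 0 < λ ≤ L such that ‖∇f(w − η∇f(w)) − ∇f(w)‖ ≥ η λ ‖∇f(w)‖ for all w ∈ ℝ^d, where η = ρ/(2L) for some 0 < ρ < 1. Let E be a positive integer with E ≤ 1/(2ρ), let w_0 ∈ ℝ^d, and define gradient-descent iterates w_{τ+1} = w_τ − η ∇f(w_τ). Then ‖Σ_{τ=0}^{E−1} ∇f(w_τ)‖ ≤ G·E·(1 − (11(E−1)ρ/64)·(λ²/L²)). -/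
/-!
Cocoercivity of the gradient of a convex `L`-smooth function,
`‖∇f y - ∇f x‖² ≤ L ⟪∇f y - ∇f x, y - x⟫` (obtained from the two Bregman-divergence bounds),
applied to one gradient step and combined with the lower bound
`‖∇f (w - η ∇f w) - ∇f w‖ ≥ η λ ‖∇f w‖`, shows that every step multiplies the gradient norm by
at most `1 - β` with `β = (4 - ρ) ρ λ² / (8 L²)`. Hence the client update has norm at most
`G ∑_{τ<E} (1 - β)^τ`, and the second-order bound `(1 - β)^τ ≤ 1 - τβ + (τβ)²/2`, sharp enough
because `Eβ ≤ 1/4`, brings this sum below `E (1 - 11 (E - 1) ρ λ² / (64 L²))`.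
-/

open scoped RealInnerProductSpace

lemma ConvexOn.comp_add_smul {E : Type*} [AddCommGroup E] [Module ℝ E] {g : E → ℝ}
    (hconv : ConvexOn ℝ Set.univ g) (x v : E) :
    ConvexOn ℝ Set.univ fun s : ℝ => g (x + s • v) := by
  refine ⟨convex_univ, fun a _ b _ s t hs ht hst => ?_⟩
  convert hconv.2 (Set.mem_univ (x + a • v)) (Set.mem_univ (x + b • v)) hs ht hst using 2
  linear_combination (norm := module) hst.symm • x

section BregmanDivergence

variable {F : Type*} [NormedAddCommGroup F] [InnerProductSpace ℝ F] [CompleteSpace F]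
  {f : F → ℝ} {L : ℝ}

noncomputable def bregmanDiv (f : F → ℝ) (x y : F) : ℝ :=
  f y - f x - ⟪gradient f x, y - x⟫

lemma hasDerivAt_comp_add_smul (hf : Differentiable ℝ f) (x v : F) (t : ℝ) :
    HasDerivAt (fun s : ℝ => f (x + s • v)) ⟪gradient f (x + t • v), v⟫ t := by
  have hline : HasDerivAt (fun s : ℝ => x + s • v) v t := by
    simpa using ((hasDerivAt_id t).smul_const v).const_add x
  simpa [Function.comp_def] using
    (hf (x + t • v)).hasGradientAt.hasFDerivAt.comp_hasDerivAt t hline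

lemma ConvexOn.bregmanDiv_nonneg (hconv : ConvexOn ℝ Set.univ f) (hf : Differentiable ℝ f)
    (x y : F) : 0 ≤ bregmanDiv f x y := by
  have hderiv := hasDerivAt_comp_add_smul hf x (y - x) 0
  rw [zero_smul, add_zero] at hderiv
  have hslope := (hconv.comp_add_smul x (y - x)).le_slope_of_hasDerivAt
    (Set.mem_univ 0) (Set.mem_univ 1) one_pos hderiv
  simp only [slope_def_field, one_smul, zero_smul, add_zero, add_sub_cancel, sub_zero,
    div_one] at hslope
  unfold bregmanDiv
  linarith

lemma bregmanDiv_le_of_lipschitz (hf : Differentiable ℝ f)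
    (hlip : ∀ x y, ‖gradient f x - gradient f y‖ ≤ L * ‖x - y‖) (x y : F) :
    bregmanDiv f x y ≤ L / 2 * ‖y - x‖ ^ 2 := by
  set v := y - x
  set φ : ℝ → ℝ := fun t => f (x + t • v) - f x - t * ⟪gradient f x, v⟫
  set B : ℝ → ℝ := fun t => L / 2 * t ^ 2 * ‖v‖ ^ 2
  have hφ (t : ℝ) : HasDerivAt φ ⟪gradient f (x + t • v) - gradient f x, v⟫ t := by
    rw [inner_sub_left]
    exact ((hasDerivAt_comp_add_smul hf x v t).sub_const _).sub
      (by simpa using (hasDerivAt_id t).mul_const ⟪gradient f x, v⟫)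
  have hB (t : ℝ) : HasDerivAt B (L * t * ‖v‖ ^ 2) t :=
    (((hasDerivAt_pow 2 t).const_mul (L / 2)).mul_const (‖v‖ ^ 2)).congr_deriv (by ring)
  have hφB : ∀ t ∈ Set.Ico (0 : ℝ) 1,
      ⟪gradient f (x + t • v) - gradient f x, v⟫ ≤ L * t * ‖v‖ ^ 2 := fun t ht =>
    calc ⟪gradient f (x + t • v) - gradient f x, v⟫
        ≤ ‖gradient f (x + t • v) - gradient f x‖ * ‖v‖ := real_inner_le_norm _ _
      _ ≤ L * ‖t • v‖ * ‖v‖ := by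
          gcongr
          simpa using hlip (x + t • v) x
      _ = L * t * ‖v‖ ^ 2 := by rw [norm_smul, Real.norm_of_nonneg ht.1]; ring
  have h := image_le_of_deriv_right_le_deriv_boundary
    (fun t _ => (hφ t).continuousAt.continuousWithinAt) (fun t _ => (hφ t).hasDerivWithinAt)
    (by simp [φ, B]) (fun t _ => (hB t).continuousAt.continuousWithinAt)
    (fun t _ => (hB t).hasDerivWithinAt) hφB (Set.right_mem_Icc.2 zero_le_one)
  simpa [φ, B, bregmanDiv, v] using h

lemma ConvexOn.norm_gradient_sub_sq_le_bregmanDiv (hconv : ConvexOn ℝ Set.univ f)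
    (hf : Differentiable ℝ f) (hL : 0 < L)
    (hlip : ∀ x y, ‖gradient f x - gradient f y‖ ≤ L * ‖x - y‖) (x y : F) :
    ‖gradient f y - gradient f x‖ ^ 2 ≤ 2 * L * bregmanDiv f x y := by
  set u := gradient f y - gradient f x
  -- `z` minimizes the gap between the quadratic upper bound around `y` and the linear lower
  -- bound around `x`; comparing the two there gives the sharp constant `1 / (2 L)`
  set z := y - L⁻¹ • u
  have hxz := hconv.bregmanDiv_nonneg hf x z
  have hyz := bregmanDiv_le_of_lipschitz hf hlip y z
  have hu : L⁻¹ * ⟪gradient f y, u⟫ - L⁻¹ * ⟪gradient f x, u⟫ = L⁻¹ * ‖u‖ ^ 2 := by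
    rw [← mul_sub, ← inner_sub_left, real_inner_self_eq_norm_sq]
  have hsq : L / 2 * (L⁻¹ * ‖u‖) ^ 2 = L⁻¹ * ‖u‖ ^ 2 / 2 := by field_simp
  simp only [bregmanDiv, z, show y - L⁻¹ • u - x = (y - x) - L⁻¹ • u by abel,
    show y - L⁻¹ • u - y = -(L⁻¹ • u) by abel, inner_sub_right, inner_neg_right,
    real_inner_smul_right, norm_neg, norm_smul, Real.norm_of_nonneg (inv_nonneg.2 hL.le), hsq]
    at hxz hyz ⊢
  calc ‖u‖ ^ 2 = 2 * L * (L⁻¹ * ‖u‖ ^ 2 / 2) := by field_simp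
    _ ≤ 2 * L * (f y - f x - (⟪gradient f x, y⟫ - ⟪gradient f x, x⟫)) := by gcongr; linarith

lemma ConvexOn.norm_gradient_sub_sq_le_inner (hconv : ConvexOn ℝ Set.univ f)
    (hf : Differentiable ℝ f) (hL : 0 < L)
    (hlip : ∀ x y, ‖gradient f x - gradient f y‖ ≤ L * ‖x - y‖) (x y : F) :
    ‖gradient f y - gradient f x‖ ^ 2 ≤ L * ⟪gradient f y - gradient f x, y - x⟫ := by
  have hxy := hconv.norm_gradient_sub_sq_le_bregmanDiv hf hL hlip x y
  have hyx := hconv.norm_gradient_sub_sq_le_bregmanDiv hf hL hlip y x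
  have hsum : bregmanDiv f x y + bregmanDiv f y x = ⟪gradient f y - gradient f x, y - x⟫ := by
    simp only [bregmanDiv, inner_sub_left, inner_sub_right]
    ring
  rw [norm_sub_rev] at hyx
  linear_combination (hxy + hyx) / 2 + L * hsum

end BregmanDivergence

section GradientDescent

variable {F : Type*} [NormedAddCommGroup F] [InnerProductSpace ℝ F] [CompleteSpace F]
  {f : F → ℝ} {L η lam : ℝ}

lemma norm_gradient_step_sq_le (hconv : ConvexOn ℝ Set.univ f) (hf : Differentiable ℝ f)
    (hL : 0 < L) (hlip : ∀ x y, ‖gradient f x - gradient f y‖ ≤ L * ‖x - y‖)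
    (hη : 0 < η) (hηL : L * η ≤ 2) (hlam : 0 ≤ lam) (x : F)
    (hlow : η * lam * ‖gradient f x‖ ≤ ‖gradient f (x - η • gradient f x) - gradient f x‖) :
    ‖gradient f (x - η • gradient f x)‖ ^ 2 ≤
      (1 - (2 - L * η) * η * lam ^ 2 / L) * ‖gradient f x‖ ^ 2 := by
  set a := gradient f x
  set b := gradient f (x - η • a)
  have hcoco : ‖a - b‖ ^ 2 ≤ L * η * ⟪a - b, a⟫ := by
    have := hconv.norm_gradient_sub_sq_le_inner hf hL hlip (x - η • a) x
    rwa [sub_sub_cancel, real_inner_smul_right, ← mul_assoc] at this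
  have hexpand : ‖b‖ ^ 2 = ‖a‖ ^ 2 - 2 * ⟪a - b, a⟫ + ‖a - b‖ ^ 2 := by
    rw [← sub_sub_cancel a b, norm_sub_sq_real, sub_sub_cancel, real_inner_comm]
  have hlow_sq : (η * lam * ‖a‖) ^ 2 ≤ ‖a - b‖ ^ 2 := by
    rw [norm_sub_rev]
    exact pow_le_pow_left₀ (by positivity) hlow 2
  have hLη : 0 < L * η := mul_pos hL hη
  have key : L * η * ‖b‖ ^ 2 ≤ L * η * ((1 - (2 - L * η) * η * lam ^ 2 / L) * ‖a‖ ^ 2) := by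
    calc L * η * ‖b‖ ^ 2 ≤ L * η * ‖a‖ ^ 2 - (2 - L * η) * ‖a - b‖ ^ 2 := by
          rw [hexpand]; linarith
      _ ≤ L * η * ‖a‖ ^ 2 - (2 - L * η) * (η * lam * ‖a‖) ^ 2 := by
          gcongr
      _ = L * η * ((1 - (2 - L * η) * η * lam ^ 2 / L) * ‖a‖ ^ 2) := by
          field_simp
  exact le_of_mul_le_mul_left key hLη

lemma norm_gradient_step_le (hconv : ConvexOn ℝ Set.univ f) (hf : Differentiable ℝ f)
    (hL : 0 < L) (hlip : ∀ x y, ‖gradient f x - gradient f y‖ ≤ L * ‖x - y‖)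
    (hη : 0 < η) (hηL : L * η ≤ 2) (hlam : 0 ≤ lam) (hlamL : lam ≤ L) (x : F)
    (hlow : η * lam * ‖gradient f x‖ ≤ ‖gradient f (x - η • gradient f x) - gradient f x‖) :
    ‖gradient f (x - η • gradient f x)‖ ≤
      (1 - (2 - L * η) * η * lam ^ 2 / (2 * L)) * ‖gradient f x‖ := by
  set β := (2 - L * η) * η * lam ^ 2 / (2 * L)
  have hβ : β ≤ 1 / 2 := by
    have hβ' : β = (2 - L * η) * (L * η) * (lam ^ 2 / L ^ 2) / 2 := by
      simp only [β]; field_simp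
    have : lam ^ 2 / L ^ 2 ≤ 1 := div_le_one_of_le₀ (pow_le_pow_left₀ hlam hlamL 2) (sq_nonneg L)
    rw [hβ']
    nlinarith [sq_nonneg (L * η - 1), div_nonneg (sq_nonneg lam) (sq_nonneg L)]
  refine le_of_pow_le_pow_left₀ two_ne_zero (by nlinarith [norm_nonneg (gradient f x)]) ?_
  calc ‖gradient f (x - η • gradient f x)‖ ^ 2 ≤ (1 - 2 * β) * ‖gradient f x‖ ^ 2 := by
        convert norm_gradient_step_sq_le hconv hf hL hlip hη hηL hlam x hlow using 3
        simp only [β]; field_simp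
    _ ≤ ((1 - β) * ‖gradient f x‖) ^ 2 := by
        rw [mul_pow]; gcongr; nlinarith [sq_nonneg β]

end GradientDescent

lemma one_sub_pow_le {β : ℝ} (h0 : 0 ≤ β) (h1 : β ≤ 1) (n : ℕ) :
    (1 - β) ^ n ≤ 1 - n * β + (n * β) ^ 2 / 2 := by
  induction n with
  | zero => simp
  | succ n ih =>
    calc (1 - β) ^ (n + 1) = (1 - β) * (1 - β) ^ n := pow_succ' _ _
      _ ≤ (1 - β) * (1 - n * β + (n * β) ^ 2 / 2) := by gcongr
      _ ≤ 1 - (n + 1 : ℕ) * β + ((n + 1 : ℕ) * β) ^ 2 / 2 := by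
          push_cast
          nlinarith [mul_nonneg (mul_nonneg h0 h0) (mul_nonneg h0 (sq_nonneg (n : ℝ)))]

lemma geom_sum_one_sub_le {β : ℝ} (h0 : 0 ≤ β) (h1 : β ≤ 1) (n : ℕ) :
    ∑ τ ∈ Finset.range n, (1 - β) ^ τ ≤ n * (1 - (1 - n * β / 2) * β * (n - 1) / 2) := by
  have hgauss : ∑ τ ∈ Finset.range n, (τ : ℝ) = n * (n - 1) / 2 := by
    induction n with
    | zero => simp
    | succ n ih => rw [Finset.sum_range_succ, ih]; push_cast; ring
  calc ∑ τ ∈ Finset.range n, (1 - β) ^ τ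
      ≤ ∑ τ ∈ Finset.range n, (1 - (1 - n * β / 2) * β * τ) := by
        refine Finset.sum_le_sum fun τ hτ => (one_sub_pow_le h0 h1 τ).trans ?_
        have hτn : (τ : ℝ) ≤ n := by exact_mod_cast (Finset.mem_range.1 hτ).le
        nlinarith [mul_nonneg (mul_nonneg h0 h0) (mul_nonneg τ.cast_nonneg (sub_nonneg.2 hτn))]
    _ = n * (1 - (1 - n * β / 2) * β * (n - 1) / 2) := by
        rw [Finset.sum_sub_distrib, ← Finset.mul_sum, hgauss]; simp; ring

lemma geom_sum_contraction_le_clip_threshold {ρ t : ℝ} {E : ℕ} (hρ : 0 < ρ) (hE : 0 < E)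
    (hEρ : (E : ℝ) ≤ 1 / (2 * ρ)) (ht0 : 0 ≤ t) (ht1 : t ≤ 1) :
    ∑ τ ∈ Finset.range E, (1 - (4 - ρ) * ρ * t / 8) ^ τ ≤
      E * (1 - 11 * (E - 1) * ρ / 64 * t) := by
  set β := (4 - ρ) * ρ * t / 8
  have hE1 : (1 : ℝ) ≤ E := by exact_mod_cast hE
  have hEρ' : E * ρ ≤ 1 / 2 := by rw [le_div_iff₀ (by positivity)] at hEρ; linarith
  have hρ2 : ρ ≤ 1 / 2 := by nlinarith
  have hρt : 0 ≤ ρ * t := mul_nonneg hρ.le ht0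
  have hβ_low : 7 * ρ * t / 16 ≤ β := by simp only [β]; nlinarith
  have hEβ : E * β ≤ 1 / 4 :=
    calc E * β = (4 - ρ) * (E * ρ) * t / 8 := by ring
      _ ≤ 4 * (1 / 2) * 1 / 8 := by gcongr; linarith
      _ = 1 / 4 := by norm_num
  have hrate : 11 * ρ * t / 32 ≤ (1 - E * β / 2) * β :=
    calc 11 * ρ * t / 32 ≤ 7 / 8 * (7 * ρ * t / 16) := by linarith
      _ ≤ (1 - E * β / 2) * β := mul_le_mul (by linarith) hβ_low (by linarith) (by linarith)
  calc ∑ τ ∈ Finset.range E, (1 - β) ^ τ ≤ E * (1 - (1 - E * β / 2) * β * (E - 1) / 2) :=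
        geom_sum_one_sub_le (by linarith) (by nlinarith) E
    _ ≤ E * (1 - 11 * (E - 1) * ρ / 64 * t) := by
        gcongr
        nlinarith [mul_le_mul_of_nonneg_left hrate (sub_nonneg.2 hE1)]

/-- Proposition 4.4 (per-client deterministic content): under Assumption 4.3, the
update after `E` local steps has norm at most
`G·E·(1 − (11(E−1)ρ/64)·(λ²/L²))`, so no clipping occurs at this threshold. -/
theorem stmt_6 {d : ℕ} (f : EuclideanSpace ℝ (Fin d) → ℝ) (L G lam ρ η : ℝ)
    (hL : 0 < L)
    (hconv : ConvexOn ℝ Set.univ f)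
    (hdiff : Differentiable ℝ f)
    (hlip : ∀ x y, ‖gradient f x - gradient f y‖ ≤ L * ‖x - y‖)
    (hG : ∀ x, ‖gradient f x‖ ≤ G)
    (hlam0 : 0 < lam) (hlamL : lam ≤ L)
    (hlow : ∀ x, ‖gradient f (x - η • gradient f x) - gradient f x‖ ≥
      η * lam * ‖gradient f x‖)
    (hρ0 : 0 < ρ) (hρ1 : ρ < 1) (hη : η = ρ / (2 * L))
    (E : ℕ) (hE : 0 < E) (hEρ : (E : ℝ) ≤ 1 / (2 * ρ))
    (w : ℕ → EuclideanSpace ℝ (Fin d))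
    (hw : ∀ τ, w (τ + 1) = w τ - η • gradient f (w τ)) :
    ‖∑ τ ∈ Finset.range E, gradient f (w τ)‖ ≤
      G * (E : ℝ) * (1 - (11 * ((E : ℝ) - 1) * ρ / 64) * (lam ^ 2 / L ^ 2)) := by
  set β := (4 - ρ) * ρ * (lam ^ 2 / L ^ 2) / 8
  have ht : lam ^ 2 / L ^ 2 ≤ 1 :=
    div_le_one_of_le₀ (pow_le_pow_left₀ hlam0.le hlamL 2) (sq_nonneg L)
  have hstep (τ : ℕ) : ‖gradient f (w (τ + 1))‖ ≤ (1 - β) * ‖gradient f (w τ)‖ := by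
    have hβ : (2 - L * η) * η * lam ^ 2 / (2 * L) = β := by
      simp only [β, hη]; field_simp; ring
    rw [hw τ, ← hβ]
    refine norm_gradient_step_le hconv hdiff hL hlip (by rw [hη]; positivity) ?_ hlam0.le hlamL
      (w τ) (hlow (w τ))
    rw [hη]; field_simp; linarith
  have hβ : β ≤ 1 :=
    calc β = (4 - ρ) * ρ * (lam ^ 2 / L ^ 2) / 8 := rfl
      _ ≤ 4 * 1 * 1 / 8 := by gcongr; linarith
      _ ≤ 1 := by norm_num
  calc ‖∑ τ ∈ Finset.range E, gradient f (w τ)‖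
      ≤ ∑ τ ∈ Finset.range E, ‖gradient f (w τ)‖ := norm_sum_le _ _
    _ ≤ ∑ τ ∈ Finset.range E, (1 - β) ^ τ * G := by
        gcongr with τ
        have hgeom := le_geom (u := fun k => ‖gradient f (w k)‖) (sub_nonneg.2 hβ) τ
          fun k _ => hstep k
        exact hgeom.trans (mul_le_mul_of_nonneg_left (hG _) (pow_nonneg (sub_nonneg.2 hβ) τ))
    _ = G * ∑ τ ∈ Finset.range E, (1 - β) ^ τ := by rw [← Finset.sum_mul, mul_comm]
    _ ≤ G * (E * (1 - (11 * (E - 1) * ρ / 64) * (lam ^ 2 / L ^ 2))) := by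
        gcongr
        · exact (norm_nonneg _).trans (hG (w 0))
        · exact geom_sum_contraction_le_clip_threshold hρ0 hE hEρ (by positivity) ht
    _ = _ := by ring
end

section
/- Let f : ℝ^d → ℝ be convex and L-smooth (differentiable with L-Lipschitz gradient, L > 0), bounded below with f* := inf f. Let w_0 ∈ ℝ^d and define gradient-descent iterates w_{τ+1} = w_τ − η ∇f(w_τ) with step size 0 < η ≤ 1/(2L). Let E be a positive integer and u := Σ_{τ=0}^{E−1} ∇f(w_τ). Fix w* ∈ ℝ^d and let Δ := f(w*) − f*. Suppose C > 0 satisfies C ≥ 4 E √(L Δ) and ‖u‖ > C. Then −2 η C ⟨u/‖u‖, w_0 − w*⟩ + η² C² ≤ −(3 η C/(8 L E)) ‖u‖. -/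
/-!
Since `w₀ - w_τ = η ∑_{s<τ} ∇f(w_s)`, the inner product `⟪u, w₀ - w*⟫` splits into
`∑_τ ⟪∇f(w_τ), w_τ - w*⟫` and `η ∑_τ ⟪∑_{s<τ} ∇f(w_s), ∇f(w_τ)⟫ = η (‖u‖² - ∑_τ ‖∇f(w_τ)‖²) / 2`.
Convexity and `L`-smoothness bound each `⟪∇f(w_τ), w_τ - w*⟫` below by `‖∇f(w_τ)‖² / (2L) - Δ`;
with `η ≤ 1/(2L)` and Cauchy–Schwarz this gives `2⟪u, w₀ - w*⟫ ≥ (1/(2LE) + η) ‖u‖² - 2EΔ`.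
The threshold `4E√(LΔ) ≤ C < ‖u‖` makes `2EΔ ≤ ‖u‖² / (8LE)`, and `ηC‖u‖ ≤ η‖u‖²` finishes.
-/

open scoped RealInnerProductSpace
open Finset

section Smooth

variable {F : Type*} [NormedAddCommGroup F] [InnerProductSpace ℝ F] [CompleteSpace F]
  {f : F → ℝ}

lemma hasDerivAt_comp_lineMap (hdiff : Differentiable ℝ f) (x y : F) (t : ℝ) :
    HasDerivAt (fun s : ℝ => f (AffineMap.lineMap x y s))
      ⟪gradient f (AffineMap.lineMap x y t), y - x⟫ t := by
  have := (hdiff _).hasGradientAt.hasFDerivAt.comp_hasDerivAt t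
    (AffineMap.hasDerivAt_lineMap (a := x) (b := y))
  exact this.congr_deriv (by simp)

lemma ConvexOn.add_inner_gradient_le (hconv : ConvexOn ℝ Set.univ f)
    (hdiff : Differentiable ℝ f) (x y : F) :
    f x + ⟪gradient f x, y - x⟫ ≤ f y := by
  have hline : ConvexOn ℝ Set.univ (fun t : ℝ => f (AffineMap.lineMap x y t)) :=
    hconv.comp_affineMap _
  have h := hline.le_slope_of_hasDerivAt (Set.mem_univ 0) (Set.mem_univ 1) one_pos
    (hasDerivAt_comp_lineMap hdiff x y 0)
  simp only [slope_def_field, AffineMap.lineMap_apply_zero, AffineMap.lineMap_apply_one] at h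
  linarith

lemma le_add_inner_gradient_add_half_mul_sq {L : ℝ} (hdiff : Differentiable ℝ f)
    (hlip : ∀ x y, ‖gradient f x - gradient f y‖ ≤ L * ‖x - y‖) (x y : F) :
    f y ≤ f x + ⟪gradient f x, y - x⟫ + L / 2 * ‖y - x‖ ^ 2 := by
  set v := y - x
  -- the gap between the quadratic upper model and `f` along the segment grows
  let gap : ℝ → ℝ := fun t =>
    f x + t * ⟪gradient f x, v⟫ + L / 2 * t ^ 2 * ‖v‖ ^ 2 - f (AffineMap.lineMap x y t)
  have hgap : ∀ t, HasDerivAt gap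
      (⟪gradient f x, v⟫ + L * t * ‖v‖ ^ 2 - ⟪gradient f (AffineMap.lineMap x y t), v⟫) t := by
    intro t
    have hq := ((hasDerivAt_pow 2 t).const_mul (L / 2)).mul_const (‖v‖ ^ 2)
    exact ((((hasDerivAt_id t).mul_const _).const_add _).add hq).sub
      (hasDerivAt_comp_lineMap hdiff x y t) |>.congr_deriv (by push_cast; ring)
  have hmono : MonotoneOn gap (Set.Icc 0 1) := by
    refine monotoneOn_of_hasDerivWithinAt_nonneg (convex_Icc 0 1)
      (fun t _ => (hgap t).continuousAt.continuousWithinAt)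
      (fun t _ => (hgap t).hasDerivWithinAt) ?_
    intro t ht
    rw [interior_Icc] at ht
    have hmove : AffineMap.lineMap x y t - x = t • v := by
      rw [AffineMap.lineMap_apply_module', add_sub_cancel_right]
    have := calc ⟪gradient f (AffineMap.lineMap x y t) - gradient f x, v⟫
        ≤ ‖gradient f (AffineMap.lineMap x y t) - gradient f x‖ * ‖v‖ := real_inner_le_norm _ _
      _ ≤ L * ‖AffineMap.lineMap x y t - x‖ * ‖v‖ := by gcongr; exact hlip _ _
      _ = L * t * ‖v‖ ^ 2 := by
        rw [hmove, norm_smul, Real.norm_of_nonneg ht.1.le]; ring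
    rw [inner_sub_left] at this
    linarith
  have h01 := hmono (Set.left_mem_Icc.2 zero_le_one) (Set.right_mem_Icc.2 zero_le_one) zero_le_one
  simp only [gap, AffineMap.lineMap_apply_zero, AffineMap.lineMap_apply_one] at h01
  linarith

lemma sq_norm_gradient_le {L fstar : ℝ} (hL : 0 < L) (hdiff : Differentiable ℝ f)
    (hlip : ∀ x y, ‖gradient f x - gradient f y‖ ≤ L * ‖x - y‖)
    (hfstar : fstar ∈ lowerBounds (Set.range f)) (x : F) :
    ‖gradient f x‖ ^ 2 ≤ 2 * L * (f x - fstar) := by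
  set g := gradient f x
  -- one gradient step of length `1 / L` decreases `f` by at least `‖g‖² / (2L)`
  have hstep := le_add_inner_gradient_add_half_mul_sq hdiff hlip x (x - L⁻¹ • g)
  have hlow : fstar ≤ f (x - L⁻¹ • g) := hfstar (Set.mem_range_self _)
  rw [sub_sub_cancel_left, inner_neg_right, real_inner_smul_right, real_inner_self_eq_norm_sq,
    norm_neg, norm_smul, Real.norm_of_nonneg (inv_nonneg.2 hL.le)] at hstep
  have hquad : L / 2 * (L⁻¹ * ‖g‖) ^ 2 = L⁻¹ * ‖g‖ ^ 2 / 2 := by field_simp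
  have hcancel : ‖g‖ ^ 2 = L * (L⁻¹ * ‖g‖ ^ 2) := by field_simp
  nlinarith

end Smooth

section Descent

variable {F : Type*} [NormedAddCommGroup F] [InnerProductSpace ℝ F]

lemma two_mul_inner_sum_sub_of_descent {η : ℝ} {g w : ℕ → F}
    (hw : ∀ τ, w (τ + 1) = w τ - η • g τ) (x : F) (n : ℕ) :
    2 * ⟪∑ τ ∈ range n, g τ, w 0 - x⟫ =
      2 * ∑ τ ∈ range n, ⟪g τ, w τ - x⟫ +
        η * (‖∑ τ ∈ range n, g τ‖ ^ 2 - ∑ τ ∈ range n, ‖g τ‖ ^ 2) := by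
  have hdrift : ∀ τ, w 0 - w τ = η • ∑ s ∈ range τ, g s := fun τ => by
    rw [← sum_range_sub', smul_sum]
    exact sum_congr rfl fun s _ => by rw [hw, sub_sub_cancel]
  induction n with
  | zero => simp
  | succ n ih =>
    have hstep : ⟪g n, w 0 - x⟫ = ⟪g n, w n - x⟫ + η * ⟪∑ s ∈ range n, g s, g n⟫ := by
      rw [← sub_add_sub_cancel (w 0) (w n) x, hdrift, inner_add_right, real_inner_smul_right,
        real_inner_comm, add_comm]
    rw [sum_range_succ, sum_range_succ, sum_range_succ, inner_add_left, norm_add_sq_real]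
    linear_combination ih + 2 * hstep

end Descent

section GradientDescent

variable {F : Type*} [NormedAddCommGroup F] [InnerProductSpace ℝ F] [CompleteSpace F]
  {f : F → ℝ} {L fstar η : ℝ} {w : ℕ → F}

lemma le_two_mul_inner_sum_gradient_sub (hL : 0 < L) (hconv : ConvexOn ℝ Set.univ f)
    (hdiff : Differentiable ℝ f) (hlip : ∀ x y, ‖gradient f x - gradient f y‖ ≤ L * ‖x - y‖)
    (hfstar : fstar ∈ lowerBounds (Set.range f)) (hη : η ≤ 1 / (2 * L))
    (hw : ∀ τ, w (τ + 1) = w τ - η • gradient f (w τ)) (x : F) (n : ℕ) :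
    (1 / (2 * L * n) + η) * ‖∑ τ ∈ range n, gradient f (w τ)‖ ^ 2 - 2 * n * (f x - fstar) ≤
      2 * ⟪∑ τ ∈ range n, gradient f (w τ), w 0 - x⟫ := by
  have hterm : ∀ τ, ‖gradient f (w τ)‖ ^ 2 / L - 2 * (f x - fstar) ≤
      2 * ⟪gradient f (w τ), w τ - x⟫ := fun τ => by
    have hconvτ := hconv.add_inner_gradient_le hdiff (w τ) x
    have hgradτ := sq_norm_gradient_le hL hdiff hlip hfstar (w τ)
    rw [← neg_sub, inner_neg_right] at hconvτ
    have : ‖gradient f (w τ)‖ ^ 2 / L ≤ 2 * (f (w τ) - fstar) := by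
      rw [div_le_iff₀ hL]; linarith
    linarith
  have hsum := sum_le_sum fun τ (_ : τ ∈ range n) => hterm τ
  rw [sum_sub_distrib, ← sum_div, sum_const, card_range, nsmul_eq_mul, ← mul_sum] at hsum
  rw [two_mul_inner_sum_sub_of_descent hw]
  set G := ∑ τ ∈ range n, ‖gradient f (w τ)‖ ^ 2
  have hcs : ‖∑ τ ∈ range n, gradient f (w τ)‖ ^ 2 / n ≤ G := by
    refine div_le_of_le_mul₀ n.cast_nonneg (sum_nonneg fun τ _ => sq_nonneg _) ?_
    calc ‖∑ τ ∈ range n, gradient f (w τ)‖ ^ 2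
        ≤ (∑ τ ∈ range n, ‖gradient f (w τ)‖) ^ 2 :=
          pow_le_pow_left₀ (norm_nonneg _) (norm_sum_le _ _) 2
      _ ≤ n * G := by
        simpa using sq_sum_le_card_mul_sum_sq (s := range n) (f := fun τ => ‖gradient f (w τ)‖)
      _ = G * n := mul_comm _ _
  have hcoef : 1 / (2 * L) ≤ 1 / L - η := by
    rw [show 1 / L = 2 * (1 / (2 * L)) by field_simp]; linarith
  have hquad : 1 / (2 * L * n) * ‖∑ τ ∈ range n, gradient f (w τ)‖ ^ 2 ≤ (1 / L - η) * G :=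
    calc _ = 1 / (2 * L) * (‖∑ τ ∈ range n, gradient f (w τ)‖ ^ 2 / n) := by ring
      _ ≤ 1 / (2 * L) * G := by gcongr
      _ ≤ (1 / L - η) * G := by gcongr
  linear_combination hsum + hquad

end GradientDescent

/-- Case 1 (equation pf-july15-5-1) in the proof of Theorem B.1: bound on the
clipped-update term when the update norm exceeds the clipping threshold. -/
theorem stmt_10 {d : ℕ} (f : EuclideanSpace ℝ (Fin d) → ℝ) (L : ℝ) (hL : 0 < L)
    (hconv : ConvexOn ℝ Set.univ f)
    (hdiff : Differentiable ℝ f)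
    (hlip : ∀ x y, ‖gradient f x - gradient f y‖ ≤ L * ‖x - y‖)
    (fstar : ℝ) (hfstar : IsGLB (Set.range f) fstar)
    (η : ℝ) (hη0 : 0 < η) (hη : η ≤ 1 / (2 * L))
    (w : ℕ → EuclideanSpace ℝ (Fin d))
    (hw : ∀ τ, w (τ + 1) = w τ - η • gradient f (w τ))
    (E : ℕ) (hE : 0 < E)
    (u : EuclideanSpace ℝ (Fin d))
    (hu : u = ∑ τ ∈ Finset.range E, gradient f (w τ))
    (wstar : EuclideanSpace ℝ (Fin d))
    (Δ : ℝ) (hΔ : Δ = f wstar - fstar)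
    (C : ℝ) (hC0 : 0 < C) (hC : C ≥ 4 * (E : ℝ) * Real.sqrt (L * Δ))
    (hnorm : ‖u‖ > C) :
    -2 * η * C * ⟪‖u‖⁻¹ • u, w 0 - wstar⟫ + η ^ 2 * C ^ 2 ≤
      -(3 * η * C / (8 * L * (E : ℝ))) * ‖u‖ := by
  have hunorm : 0 < ‖u‖ := hC0.trans hnorm
  have hΔ0 : 0 ≤ Δ := hΔ ▸ sub_nonneg.2 (hfstar.1 ⟨wstar, rfl⟩)
  have hgap : 2 * E * Δ ≤ ‖u‖ ^ 2 / (8 * L * E) := by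
    have hsq : 16 * L * E ^ 2 * Δ ≤ ‖u‖ ^ 2 :=
      calc 16 * L * E ^ 2 * Δ = (4 * E * √(L * Δ)) ^ 2 := by
            rw [mul_pow, Real.sq_sqrt (by positivity)]; ring
        _ ≤ ‖u‖ ^ 2 := by gcongr; linarith
    rw [le_div_iff₀ (by positivity)]
    linarith
  have hinner := le_two_mul_inner_sum_gradient_sub hL hconv hdiff hlip hfstar.1 hη hw wstar E
  rw [← hu, ← hΔ] at hinner
  have hkey : 3 * ‖u‖ ^ 2 / (8 * L * E) ≤ 2 * ⟪u, w 0 - wstar⟫ - η * C * ‖u‖ := by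
    have hCu : η * C * ‖u‖ ≤ η * ‖u‖ ^ 2 := by
      rw [sq, ← mul_assoc]; gcongr
    have hsplit : 1 / (2 * L * E) * ‖u‖ ^ 2 =
        3 * ‖u‖ ^ 2 / (8 * L * E) + ‖u‖ ^ 2 / (8 * L * E) := by
      ring
    linarith
  calc -2 * η * C * ⟪‖u‖⁻¹ • u, w 0 - wstar⟫ + η ^ 2 * C ^ 2
      = -(η * C / ‖u‖) * (2 * ⟪u, w 0 - wstar⟫ - η * C * ‖u‖) := by
        rw [real_inner_smul_left]; field_simp; ring
    _ ≤ -(η * C / ‖u‖) * (3 * ‖u‖ ^ 2 / (8 * L * E)) :=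
        mul_le_mul_of_nonpos_left hkey (neg_nonpos.2 (by positivity))
    _ = -(3 * η * C / (8 * L * E)) * ‖u‖ := by field_simp
end
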